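/- On a Kähler–Einstein manifold, the curvature action on symmetric (0,2)-tensors satisfies ⟨R̊h,h⟩ = ⟨B̊h,h⟩ − (μ/(n+2))·{|h|² − 3Σ_{i,j} h(e_i,e_j)h(Je_i,Je_j)}. In particular ⟨R̊h₁,h₁⟩ = ⟨B̊h₁,h₁⟩ + (2μ/(n+2))|h₁|² for hermitian h₁ and ⟨R̊h₂,h₂⟩ = ⟨B̊h₂,h₂⟩ − (4μ/(n+2))|h₂|² for skew-hermitian h₂. -/
import Mathlib


open scoped BigOperators

/-- The action of a `(0,4)`-tensor on `(0,2)`-tensors: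
`(T̊ h)(X,Y) = ∑ T(e_k, X, Y, e_l) h(e_l, e_k)`. -/
def curvAct (n : ℕ) (T : Fin n → Fin n → Fin n → Fin n → ℝ)
    (h : Matrix (Fin n) (Fin n) ℝ) : Matrix (Fin n) (Fin n) ℝ :=
  fun i j => ∑ k, ∑ l, T k i j l * h l k

/-- The Kulkarni–Nomizu product of two bilinear forms (in index notation). -/
def kulkarniNomizu (n : ℕ) (h k : Matrix (Fin n) (Fin n) ℝ) :
    Fin n → Fin n → Fin n → Fin n → ℝ :=
  fun X Y Z V => h X V * k Y Z + h Y Z * k X V - h X Z * k Y V - h Y V * k X Z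

/-- Trace-type sum of a skew matrix against a symmetric one vanishes. -/
lemma aux_trJh (n : ℕ) (J h : Matrix (Fin n) (Fin n) ℝ)
    (hJ' : ∀ a b, J b a = -J a b) (hs : ∀ a b, h b a = h a b) :
    ∑ i, ∑ j, J i j * h i j = 0 := by
  have h1 : (∑ i, ∑ j, J i j * h i j) = -∑ i, ∑ j, J i j * h i j := by
    conv_lhs => rw [Finset.sum_comm]
    calc (∑ j, ∑ i, J i j * h i j) = ∑ j, ∑ i, -(J j i * h j i) := by
          refine Finset.sum_congr rfl fun j _ => Finset.sum_congr rfl fun i _ => ?_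
          rw [hJ' j i, hs j i]; ring
      _ = -∑ j, ∑ i, J j i * h j i := by simp
  linarith

/-- The `g ⩕ g` part. -/
lemma aux_A1 (n : ℕ) (h : Matrix (Fin n) (Fin n) ℝ)
    (htr : ∑ i, h i i = 0) :
    ∑ i, ∑ j, ∑ k, ∑ l, kulkarniNomizu n 1 1 k i j l * h l k * h i j
      = -2 * ∑ i, ∑ j, h i j * h i j := by
  have pull : ∀ (c : Prop) [Decidable c] (f : Fin n → ℝ),
      (∑ y : Fin n, if c then f y else 0) = if c then ∑ y, f y else 0 := by
    intro c inst f; split <;> simp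
  simp only [kulkarniNomizu, Matrix.one_apply, ite_mul, one_mul, zero_mul, mul_ite, mul_one,
    mul_zero, add_mul, sub_mul, Finset.sum_add_distrib, Finset.sum_sub_distrib,
    Finset.sum_ite_eq, Finset.sum_ite_eq', Finset.mem_univ, if_true, pull]
  simp only [← Finset.sum_mul, htr, zero_mul, Finset.sum_const_zero]
  ring

/-- On a Kähler–Einstein manifold with `Ric = μg` and Bochner tensor
`B = R − (μ/(2(n+2))){g⩕g + ω⩕ω − 4ω⊗ω}`, for every traceless symmetric `h`:
`⟨R̊h,h⟩ = ⟨B̊h,h⟩ − (μ/(n+2))·(|h|² − 3∑ h(eᵢ,eⱼ)h(Jeᵢ,Jeⱼ))`; in particular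
`⟨R̊h,h⟩ = ⟨B̊h,h⟩ + (2μ/(n+2))|h|²` for hermitian `h` and
`⟨R̊h,h⟩ = ⟨B̊h,h⟩ − (4μ/(n+2))|h|²` for skew-hermitian `h`. -/
theorem bochner_curvature_decomposition (n : ℕ) (hn : 3 ≤ n) (μ : ℝ)
    (J : Matrix (Fin n) (Fin n) ℝ)
    (hJ2 : J * J = -1) (hJskew : J.transpose = -J)
    (g : Matrix (Fin n) (Fin n) ℝ) (hg : g = 1)
    (ω : Matrix (Fin n) (Fin n) ℝ) (hω : ∀ i j, ω i j = J j i)  -- ω(X,Y) = g(JX,Y)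
    (R B : Fin n → Fin n → Fin n → Fin n → ℝ)
    (hB : ∀ i j k l, B i j k l = R i j k l - μ / (2 * ((n : ℝ) + 2)) *
      (kulkarniNomizu n g g i j k l + kulkarniNomizu n ω ω i j k l
        - 4 * (ω i j * ω k l)))
    (h : Matrix (Fin n) (Fin n) ℝ) (hhsymm : h.IsSymm) (hhtr : ∑ i, h i i = 0)
    -- `hJh i j = h(Jeᵢ, Jeⱼ)`
    (hJh : Matrix (Fin n) (Fin n) ℝ)
    (hhJh : ∀ i j, hJh i j = ∑ a, ∑ b, J a i * J b j * h a b) :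
    (∑ i, ∑ j, curvAct n R h i j * h i j
      = (∑ i, ∑ j, curvAct n B h i j * h i j)
        - μ / ((n : ℝ) + 2) *
          ((∑ i, ∑ j, h i j ^ 2) - 3 * ∑ i, ∑ j, h i j * hJh i j)) ∧
    ((∀ i j, hJh i j = h i j) →
      ∑ i, ∑ j, curvAct n R h i j * h i j
        = (∑ i, ∑ j, curvAct n B h i j * h i j)
          + 2 * μ / ((n : ℝ) + 2) * ∑ i, ∑ j, h i j ^ 2) ∧
    ((∀ i j, hJh i j = -h i j) →
      ∑ i, ∑ j, curvAct n R h i j * h i j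
        = (∑ i, ∑ j, curvAct n B h i j * h i j)
          - 4 * μ / ((n : ℝ) + 2) * ∑ i, ∑ j, h i j ^ 2) := by
  have hn2 : ((n : ℝ) + 2) ≠ 0 := by positivity
  have hJ' : ∀ a b, J b a = -J a b := by
    intro a b
    have := congrFun (congrFun hJskew a) b
    simpa [Matrix.transpose_apply, Matrix.neg_apply] using this
  have hs : ∀ a b, h b a = h a b := by
    intro a b
    have := congrFun (congrFun hhsymm a) b
    simpa [Matrix.transpose_apply] using this
  have htrJh : ∑ i, ∑ j, J i j * h i j = 0 := aux_trJh n J h hJ' hs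
  set N := ∑ i, ∑ j, h i j * h i j with hN
  set P := ∑ i, ∑ j, h i j * hJh i j with hPdef
  -- expansion of P
  have hPexp : P = ∑ i, ∑ j, ∑ a, ∑ b, h i j * (J a i * J b j * h a b) := by
    rw [hPdef]
    refine Finset.sum_congr rfl fun i _ => Finset.sum_congr rfl fun j _ => ?_
    rw [hhJh, Finset.mul_sum]
    exact Finset.sum_congr rfl fun a _ => (Finset.mul_sum _ _ _)
  -- ⟨h, hJh∘swap⟩ = P
  have hP' : ∑ i, ∑ j, h i j * hJh j i = P := by
    rw [hPdef]
    conv_lhs => rw [Finset.sum_comm]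
    refine Finset.sum_congr rfl fun i _ => Finset.sum_congr rfl fun j _ => ?_
    rw [hs j i]
  -- the ω-trace vanishes
  have hω0 : ∑ i, ∑ j, ∑ k, ∑ l, ω k l * ω i j * h l k * h i j = 0 := by
    have inner0 : (∑ k, ∑ l, ω k l * h l k) = 0 := by
      conv_lhs => rw [Finset.sum_comm]
      calc (∑ l, ∑ k, ω k l * h l k) = ∑ l, ∑ k, J l k * h l k := by
            refine Finset.sum_congr rfl fun l _ => Finset.sum_congr rfl fun k _ => ?_
            rw [hω]
        _ = 0 := htrJh
    calc ∑ i, ∑ j, ∑ k, ∑ l, ω k l * ω i j * h l k * h i j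
        = ∑ i, ∑ j, (ω i j * h i j) * ∑ k, ∑ l, ω k l * h l k := by
          refine Finset.sum_congr rfl fun i _ => Finset.sum_congr rfl fun j _ => ?_
          rw [Finset.mul_sum]
          refine Finset.sum_congr rfl fun k _ => ?_
          rw [Finset.mul_sum]
          exact Finset.sum_congr rfl fun l _ => by ring
      _ = 0 := by rw [inner0]; simp
  -- T4 term
  have hT4 : ∑ i, ∑ j, ∑ k, ∑ l, ω k j * ω i l * h l k * h i j = -P := by
    calc ∑ i, ∑ j, ∑ k, ∑ l, ω k j * ω i l * h l k * h i j
        = ∑ i, ∑ j, ∑ l, ∑ k, ω k j * ω i l * h l k * h i j := by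
          refine Finset.sum_congr rfl fun i _ => Finset.sum_congr rfl fun j _ => ?_
          exact Finset.sum_comm
      _ = ∑ i, ∑ j, ∑ l, ∑ k, -(h i j * (J l i * J k j * h l k)) := by
          refine Finset.sum_congr rfl fun i _ => Finset.sum_congr rfl fun j _ =>
            Finset.sum_congr rfl fun l _ => Finset.sum_congr rfl fun k _ => ?_
          rw [hω, hω, hJ' j k]; ring
      _ = -P := by rw [hPexp]; simp
  -- T5 term
  have hT5 : ∑ i, ∑ j, ∑ k, ∑ l, ω k i * ω j l * h l k * h i j = -P := by
    have hPflip : ∑ i, ∑ j, ∑ l, ∑ k, h i j * (J l j * J k i * h l k) = P := by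
      rw [← hP']
      refine Finset.sum_congr rfl fun i _ => Finset.sum_congr rfl fun j _ => ?_
      rw [hhJh, Finset.mul_sum]
      exact Finset.sum_congr rfl fun a _ => (Finset.mul_sum _ _ _).symm
    calc ∑ i, ∑ j, ∑ k, ∑ l, ω k i * ω j l * h l k * h i j
        = ∑ i, ∑ j, ∑ l, ∑ k, ω k i * ω j l * h l k * h i j := by
          refine Finset.sum_congr rfl fun i _ => Finset.sum_congr rfl fun j _ => ?_
          exact Finset.sum_comm
      _ = ∑ i, ∑ j, ∑ l, ∑ k, -(h i j * (J l j * J k i * h l k)) := by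
          refine Finset.sum_congr rfl fun i _ => Finset.sum_congr rfl fun j _ =>
            Finset.sum_congr rfl fun l _ => Finset.sum_congr rfl fun k _ => ?_
          rw [hω, hω, hJ' i k]; ring
      _ = -P := by rw [← hPflip]; simp
  -- the ω ⩕ ω part
  have hA2 : ∑ i, ∑ j, ∑ k, ∑ l, kulkarniNomizu n ω ω k i j l * h l k * h i j
      = 2 * P := by
    have split : ∀ i j k l : Fin n, kulkarniNomizu n ω ω k i j l * h l k * h i j
        = 2 * (ω k l * ω i j * h l k * h i j) - 2 * (ω k j * ω i l * h l k * h i j) := by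
      intro i j k l; simp only [kulkarniNomizu]; ring
    calc ∑ i, ∑ j, ∑ k, ∑ l, kulkarniNomizu n ω ω k i j l * h l k * h i j
        = ∑ i, ∑ j, ∑ k, ∑ l, (2 * (ω k l * ω i j * h l k * h i j)
            - 2 * (ω k j * ω i l * h l k * h i j)) := by
          exact Finset.sum_congr rfl fun i _ => Finset.sum_congr rfl fun j _ =>
            Finset.sum_congr rfl fun k _ => Finset.sum_congr rfl fun l _ => split i j k l
      _ = 2 * (∑ i, ∑ j, ∑ k, ∑ l, ω k l * ω i j * h l k * h i j)
            - 2 * (∑ i, ∑ j, ∑ k, ∑ l, ω k j * ω i l * h l k * h i j) := by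
          simp [Finset.sum_sub_distrib, Finset.mul_sum]
      _ = 2 * P := by rw [hω0, hT4]; ring
  -- the key identity
  have hA1' : ∑ i, ∑ j, ∑ k, ∑ l, kulkarniNomizu n g g k i j l * h l k * h i j
      = -2 * N := by
    rw [hg]; exact aux_A1 n h hhtr
  have step1 : ∀ (T : Fin n → Fin n → Fin n → Fin n → ℝ),
      ∑ i, ∑ j, curvAct n T h i j * h i j
        = ∑ i, ∑ j, ∑ k, ∑ l, T k i j l * h l k * h i j := by
    intro T
    refine Finset.sum_congr rfl fun i _ => Finset.sum_congr rfl fun j _ => ?_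
    simp only [curvAct, Finset.sum_mul]
  have key : ∑ i, ∑ j, curvAct n B h i j * h i j
      = (∑ i, ∑ j, curvAct n R h i j * h i j)
        - μ / (2 * ((n : ℝ) + 2)) * (-2 * N + 6 * P) := by
    calc ∑ i, ∑ j, curvAct n B h i j * h i j
        = ∑ i, ∑ j, ∑ k, ∑ l, B k i j l * h l k * h i j := step1 B
      _ = ∑ i, ∑ j, ∑ k, ∑ l, (R k i j l * h l k * h i j
            - μ / (2 * ((n : ℝ) + 2)) * (kulkarniNomizu n g g k i j l * h l k * h i j)
            - μ / (2 * ((n : ℝ) + 2)) * (kulkarniNomizu n ω ω k i j l * h l k * h i j)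
            + 4 * (μ / (2 * ((n : ℝ) + 2))) * (ω k i * ω j l * h l k * h i j)) := by
          refine Finset.sum_congr rfl fun i _ => Finset.sum_congr rfl fun j _ =>
            Finset.sum_congr rfl fun k _ => Finset.sum_congr rfl fun l _ => ?_
          rw [hB]; ring
      _ = (∑ i, ∑ j, ∑ k, ∑ l, R k i j l * h l k * h i j)
            - μ / (2 * ((n : ℝ) + 2)) *
              (∑ i, ∑ j, ∑ k, ∑ l, kulkarniNomizu n g g k i j l * h l k * h i j)
            - μ / (2 * ((n : ℝ) + 2)) *
              (∑ i, ∑ j, ∑ k, ∑ l, kulkarniNomizu n ω ω k i j l * h l k * h i j)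
            + 4 * (μ / (2 * ((n : ℝ) + 2))) *
              (∑ i, ∑ j, ∑ k, ∑ l, ω k i * ω j l * h l k * h i j) := by
          simp only [Finset.sum_add_distrib, Finset.sum_sub_distrib, ← Finset.mul_sum]
      _ = _ := by
          rw [hA1', hA2, hT5, ← step1 R]; ring
  have hsq : ∑ i, ∑ j, h i j ^ 2 = N := by
    rw [hN]
    exact Finset.sum_congr rfl fun i _ => Finset.sum_congr rfl fun j _ => sq (h i j) ▸ by ring
  refine ⟨?_, ?_, ?_⟩
  · rw [key, hsq]
    field_simp
    ring
  · intro hherm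
    have hPN : P = N := by
      rw [hPdef, hN]
      exact Finset.sum_congr rfl fun i _ => Finset.sum_congr rfl fun j _ => by rw [hherm]
    rw [key, hsq, hPN]
    field_simp
    ring
  · intro hskew
    have hPN : P = -N := by
      rw [hPdef, hN, ← Finset.sum_neg_distrib]
      refine Finset.sum_congr rfl fun i _ => ?_
      rw [← Finset.sum_neg_distrib]
      exact Finset.sum_congr rfl fun j _ => by rw [hskew]; ring
    rw [key, hsq, hPN]
    field_simp
    ring
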